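/- Let G = ℤ_{n₁} × ⋯ × ℤ_{n_d} with all n_i ≥ 2 and n = n₁n₂⋯n_d, let S be an inverse-closed subset of G∖{(0,…,0)} with ⟨S⟩ = G, and set S₀ = S ∪ {(0,…,0)}. Suppose that |S₀| = p^l is a prime power such that p^l | n but p^{l+1} ∤ n, and suppose further that exactly one of n₁,…,n_d, say n_t, is divisible by p. Then Cay(G, S) admits a perfect code if and only if s_t ≢ s_t′ (mod p^l) for each pair of distinct elements (s₁,…,s_d), (s₁′,…,s_d′) of S₀. -/

import Mathlib

/-- The Cayley graph of an additive group `G` with connection set `S`.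
(When `S` is inverse-closed and does not contain `0`, `x` and `y` are adjacent
iff `y - x ∈ S`.) -/
def cayley {G : Type*} [AddGroup G] (S : Set G) : SimpleGraph G :=
  SimpleGraph.fromRel (fun x y => y - x ∈ S)

/-- A perfect code in a graph: an independent set such that every vertex outside it
has exactly one neighbour in it. -/
def IsPerfectCode {V : Type*} (Γ : SimpleGraph V) (C : Set V) : Prop :=
  (∀ x ∈ C, ∀ y ∈ C, ¬ Γ.Adj x y) ∧ ∀ v, v ∉ C → ∃! c, c ∈ C ∧ Γ.Adj v c

/-- A total perfect code in a graph: every vertex has exactly one neighbour in it. -/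
def IsTotalPerfectCode {V : Type*} (Γ : SimpleGraph V) (C : Set V) : Prop :=
  ∀ v, ∃! c, c ∈ C ∧ Γ.Adj v c

/-- The subgroup of periods of a subset `X` of an abelian group:
`{g | X + g = X}`. -/
def periods {G : Type*} [AddCommGroup G] (X : Set G) : AddSubgroup G where
  carrier := {g | ∀ x : G, x + g ∈ X ↔ x ∈ X}
  zero_mem' := by simp
  add_mem' := by
    intro a b ha hb x
    rw [← add_assoc]
    exact (hb _).trans (ha x)
  neg_mem' := by
    intro a ha x
    have := ha (x + -a)
    simpa using this.symm

/-- `(A, B)` is a factorization of the abelian group `G`: every element of `G` can be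
uniquely written as `a + b` with `a ∈ A` and `b ∈ B`. -/
def IsFactorization {G : Type*} [AddCommGroup G] (A B : Set G) : Prop :=
  ∀ g : G, ∃! ab : G × G, ab.1 ∈ A ∧ ab.2 ∈ B ∧ ab.1 + ab.2 = g

/-- An abelian group is good if in every factorization of it into two factors
at least one factor is periodic. -/
def IsGood (G : Type*) [AddCommGroup G] : Prop :=
  ∀ A B : Set G, IsFactorization A B → periods A ≠ ⊥ ∨ periods B ≠ ⊥

/-!
A perfect code `C` of `Cay(G, S)` is a factorization `G = S₀ ⊕ C`. Push it forward along the
surjection `F : G → ℤ_{p^l}`, `x ↦ x_t mod p^l`, into the group algebra `𝔽_p[ℤ_{p^l}]`; with `T`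
the sum of all group elements this gives `F(S₀) · F(C) = |C| · T`. In characteristic `p`, a sum
`y` of `m` group elements satisfies `y ^ p^l = m`, so `F(C)` is a unit because `p ∤ |C| = n / p^l`.
As `T · F(C) = |C| · T` as well, `F(S₀) = T`: every residue is hit by `S₀`, and since
`|S₀| = p^l`, `F` is injective on `S₀`. Conversely, if `F` is injective on `S₀`, then `ker F` is a
perfect code.
-/

open Finset AddMonoidAlgebra

section Cayley

variable {G : Type*} [AddCommGroup G] {S : Finset G}

theorem cayley_adj_iff (h0 : (0 : G) ∉ S) (hinv : ∀ s ∈ S, -s ∈ S) {x y : G} :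
    (cayley (S : Set G)).Adj x y ↔ y - x ∈ S := by
  rw [cayley, SimpleGraph.fromRel_adj]
  refine ⟨fun ⟨_, h⟩ => h.elim id fun h => by simpa using hinv _ h, fun h => ⟨?_, .inl h⟩⟩
  rintro rfl
  exact h0 (by simpa using h)

theorem IsPerfectCode.bijOn_add [DecidableEq G] (h0 : (0 : G) ∉ S) (hinv : ∀ s ∈ S, -s ∈ S)
    {C : Set G} (hC : IsPerfectCode (cayley (S : Set G)) C) :
    Set.BijOn (fun x : G × G => x.1 + x.2) (↑(insert 0 S) ×ˢ C) Set.univ := by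
  have adj_add : ∀ {s c}, s ∈ S → (cayley (S : Set G)).Adj (s + c) c := fun hs =>
    (cayley_adj_iff h0 hinv).2 (by simpa using hinv _ hs)
  refine ⟨fun _ _ => trivial, ?_, fun g _ => ?_⟩
  · rintro ⟨s, c⟩ ⟨hs, hc⟩ ⟨s', c'⟩ ⟨hs', hc'⟩ (h : s + c = s' + c')
    suffices c = c' by subst this; simp_all
    simp only [coe_insert, Set.mem_insert_iff, mem_coe] at hs hs'
    rcases hs with rfl | hs <;> rcases hs' with rfl | hs'
    · simpa using h
    · exact (hC.1 c hc c' hc' (by rw [zero_add] at h; exact h ▸ adj_add hs')).elim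
    · exact (hC.1 c' hc' c hc (by rw [zero_add] at h; exact h ▸ adj_add hs)).elim
    · have hv : s + c ∉ C := fun hv => hC.1 _ hv c hc (adj_add hs)
      exact (hC.2 _ hv).unique ⟨hc, adj_add hs⟩ ⟨hc', h ▸ adj_add hs'⟩
  · by_cases hg : g ∈ C
    · exact ⟨(0, g), ⟨by simp, hg⟩, zero_add g⟩
    obtain ⟨c, ⟨hc, hgc⟩, -⟩ := hC.2 g hg
    have hs : g - c ∈ S := by simpa using hinv _ ((cayley_adj_iff h0 hinv).1 hgc)
    exact ⟨(g - c, c), ⟨by simp [hs], hc⟩, sub_add_cancel g c⟩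

theorem isPerfectCode_ker {H : Type*} [AddCommGroup H] [DecidableEq G] (h0 : (0 : G) ∉ S)
    (hinv : ∀ s ∈ S, -s ∈ S) (F : G →+ H) (hinj : Set.InjOn F ↑(insert 0 S))
    (hsurj : Set.SurjOn F ↑(insert 0 S) Set.univ) :
    IsPerfectCode (cayley (S : Set G)) (F.ker : Set G) := by
  have mem0 : (0 : G) ∈ (↑(insert 0 S) : Set G) := by simp
  have memS : ∀ {s}, s ∈ S → s ∈ (↑(insert 0 S) : Set G) := fun hs => by simp [hs]
  refine ⟨fun c hc c' hc' hadj => ?_, fun v hv => ?_⟩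
  · have hs := (cayley_adj_iff h0 hinv).1 hadj
    have : c' - c = 0 := hinj (memS hs) mem0 (by simp_all [AddMonoidHom.mem_ker])
    exact h0 (this ▸ hs)
  obtain ⟨s, hs, hFs⟩ := hsurj (Set.mem_univ (F v))
  have hsS : s ∈ S := by
    simp only [coe_insert, Set.mem_insert_iff, mem_coe] at hs
    refine hs.resolve_left ?_
    rintro rfl
    exact hv (by simp [AddMonoidHom.mem_ker, ← hFs])
  refine ⟨v - s, ⟨by simp [AddMonoidHom.mem_ker, hFs], (cayley_adj_iff h0 hinv).2 ?_⟩, ?_⟩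
  · simpa using hinv s hsS
  rintro c ⟨hc, hadj⟩
  have hvc : v - c ∈ S := by simpa using hinv _ ((cayley_adj_iff h0 hinv).1 hadj)
  have : v - c = s := hinj (memS hvc) hs (by simp_all [AddMonoidHom.mem_ker])
  rw [← this, sub_sub_cancel]

end Cayley

namespace AddMonoidAlgebra

variable {R ι : Type*} [CommRing R]

theorem coeff_sum_single_one {M : Type*} [DecidableEq M] (s : Finset ι) (f : ι → M) (m : M) :
    (∑ i ∈ s, single (f i) (1 : R)).coeff m = #{i ∈ s | f i = m} := by
  simp [Finsupp.single_apply, sum_boole]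

variable {H : Type*} [AddCommGroup H]

theorem sum_single_one_mul_single [Fintype H] (h : H) :
    (∑ g : H, single g (1 : R)) * single h 1 = ∑ g, single g 1 := by
  simp only [sum_mul, single_mul_single, one_mul]
  exact Fintype.sum_equiv (Equiv.addRight h) _ _ fun _ => rfl

theorem sum_single_one_mul_sum [Fintype H] (s : Finset ι) (f : ι → H) :
    (∑ g : H, single g (1 : R)) * ∑ i ∈ s, single (f i) 1 = #s • ∑ g, single g 1 := by
  simp [mul_sum, sum_single_one_mul_single]

theorem sum_single_one_pow_expChar_pow (p k : ℕ) [ExpChar R p] (hH : ∀ h : H, p ^ k • h = 0)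
    (s : Finset ι) (f : ι → H) : (∑ i ∈ s, single (f i) (1 : R)) ^ p ^ k = #s := by
  have : ExpChar R[H] p := expChar_of_injective_algebraMap (R := R) (A := R[H])
    (by rw [coe_algebraMap]; exact single_right_injective.comp Function.injective_id) p
  simp [sum_pow_char_pow, single_pow, hH, natCast_def]

theorem eq_sum_single_one_of_mul_eq (p k : ℕ) [ExpChar R p] [Fintype H]
    (hH : ∀ h : H, p ^ k • h = 0) {a : R[H]} (s : Finset ι) (f : ι → H) (hs : IsUnit (#s : R))
    (h : a * ∑ i ∈ s, single (f i) 1 = #s • ∑ g, single g 1) : a = ∑ g, single g 1 := by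
  have hb : IsUnit (∑ i ∈ s, single (f i) (1 : R)) := by
    refine (isUnit_pow_iff (pow_ne_zero k (expChar_pos R p).ne')).1 ?_
    rw [sum_single_one_pow_expChar_pow p k hH]
    simpa using hs.map (algebraMap R R[H])
  exact hb.mul_left_injective (h.trans (sum_single_one_mul_sum s f).symm)

theorem sum_single_one_map_eq_smul_sum [Fintype H] [DecidableEq H] {G : Type*} [AddCommGroup G]
    [Fintype G] (F : G →+ H) (hF : Function.Surjective F) :
    ∑ g : G, single (F g) (1 : R) = #{g | F g = 0} • ∑ h, single h 1 := by
  rw [← sum_fiberwise univ F, smul_sum]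
  refine sum_congr rfl fun h _ => ?_
  rw [sum_congr rfl fun g hg => by rw [(mem_filter.1 hg).2], sum_const,
    AddMonoidHom.card_fiber_eq_of_mem_range F (hF h) (hF 0)]

end AddMonoidAlgebra

theorem AddMonoidHom.card_eq_card_mul_card_fiber_zero {G H : Type*} [AddGroup G] [Fintype G]
    [AddMonoid H] [Fintype H] [DecidableEq H] (F : G →+ H) (hF : Function.Surjective F) :
    Fintype.card G = Fintype.card H * #{g | F g = 0} := by
  rw [← card_univ, card_eq_sum_card_fiberwise (fun g _ => mem_univ (F g)),
    sum_congr rfl fun h _ => AddMonoidHom.card_fiber_eq_of_mem_range F (hF h) (hF 0), sum_const,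
    card_univ, smul_eq_mul]

section PerfectCode

variable {G H : Type*} [AddCommGroup G] [Fintype G] [DecidableEq G] [AddCommGroup H] [Fintype H]
  {S : Finset G}

theorem IsPerfectCode.injOn_of_surjective {p k : ℕ} [Fact p.Prime] (hH : ∀ h : H, p ^ k • h = 0)
    (F : G →+ H) (hF : Function.Surjective F) (h0 : (0 : G) ∉ S) (hinv : ∀ s ∈ S, -s ∈ S)
    (hcard : #(insert 0 S) = Fintype.card H) (hG : ¬ p * Fintype.card H ∣ Fintype.card G)
    {C : Finset G} (hC : IsPerfectCode (cayley (S : Set G)) C) : Set.InjOn F ↑(insert 0 S) := by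
  classical
  have htile := hC.bijOn_add h0 hinv
  rw [← coe_product] at htile
  have hsurj : Set.SurjOn (fun x : G × G => x.1 + x.2) ↑(insert 0 S ×ˢ C) ↑(univ : Finset G) := by
    simpa using htile.surjOn
  have hcardG : Fintype.card H * #C = Fintype.card G := by
    rw [← hcard, ← card_product, ← card_univ]
    exact card_nbij _ (fun _ _ => mem_univ _) htile.injOn hsurj
  have hkerC : #{g | F g = 0} = #C := Nat.eq_of_mul_eq_mul_left Fintype.card_pos
    ((F.card_eq_card_mul_card_fiber_zero hF).symm.trans hcardG.symm)
  have hpC : ¬ p ∣ #C := fun hp => hG (hcardG ▸ mul_comm p _ ▸ mul_dvd_mul_left _ hp)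
  have hS₀C : (∑ s ∈ insert 0 S, single (F s) (1 : ZMod p)) * ∑ c ∈ C, single (F c) 1 =
      #C • ∑ h, single h 1 := by
    calc _ = ∑ x ∈ insert 0 S ×ˢ C, single (F (x.1 + x.2)) (1 : ZMod p) := by
          simp [sum_mul_sum, sum_product, single_mul_single]
      _ = ∑ g, single (F g) 1 :=
          sum_nbij _ (fun _ _ => mem_univ _) htile.injOn hsurj fun _ _ => rfl
      _ = _ := by rw [sum_single_one_map_eq_smul_sum F hF, hkerC]
  have hS₀ := eq_sum_single_one_of_mul_eq p k hH C (fun c => F c)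
    (by simpa [ZMod.natCast_eq_zero_iff] using hpC) hS₀C
  have himage : image F (insert 0 S) = univ := eq_univ_of_forall fun h => by
    have hcount : (∑ s ∈ insert 0 S, single (F s) (1 : ZMod p)).coeff h = 1 := by
      simp [hS₀, Finsupp.single_apply]
    rw [coeff_sum_single_one] at hcount
    obtain ⟨s, hs⟩ := card_pos.1 (Nat.pos_of_ne_zero fun hzero => by
      rw [hzero, Nat.cast_zero] at hcount; exact zero_ne_one hcount)
    exact mem_image.2 ⟨s, mem_filter.1 hs⟩
  exact injOn_of_card_image_eq (by rw [himage, card_univ, hcard])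

theorem exists_isPerfectCode_iff_injOn {p k : ℕ} [Fact p.Prime] (hH : ∀ h : H, p ^ k • h = 0)
    (F : G →+ H) (hF : Function.Surjective F) (h0 : (0 : G) ∉ S) (hinv : ∀ s ∈ S, -s ∈ S)
    (hcard : #(insert 0 S) = Fintype.card H) (hG : ¬ p * Fintype.card H ∣ Fintype.card G) :
    (∃ C : Set G, IsPerfectCode (cayley (S : Set G)) C) ↔ Set.InjOn F ↑(insert 0 S) := by
  refine ⟨fun ⟨C, hC⟩ => ?_, fun hinj => ⟨F.ker, isPerfectCode_ker h0 hinv F hinj ?_⟩⟩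
  · obtain ⟨C, rfl⟩ := C.toFinite.exists_finset_coe
    exact hC.injOn_of_surjective hH F hF h0 hinv hcard hG
  · classical
    have himage : image F (insert 0 S) = univ :=
      eq_univ_of_card _ (by rw [card_image_of_injOn hinj, hcard])
    intro h _
    obtain ⟨s, hs, rfl⟩ := mem_image.1 (himage ▸ mem_univ h)
    exact ⟨s, hs, rfl⟩

end PerfectCode

theorem Nat.Prime.pow_dvd_apply_of_dvd_prod {ι : Type*} [Fintype ι] {p l : ℕ} (hp : p.Prime)
    {f : ι → ℕ} {t : ι} (huniq : ∀ i, p ∣ f i → i = t) (h : p ^ l ∣ ∏ i, f i) : p ^ l ∣ f t := by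
  classical
  rw [← mul_prod_erase univ f (mem_univ t)] at h
  refine (Nat.Coprime.pow_left l (Nat.Coprime.prod_right fun i hi => ?_)).dvd_of_dvd_mul_right h
  exact hp.coprime_iff_not_dvd.2 fun hpi => ne_of_mem_erase hi (huniq i hpi)

theorem perfectCode_iff_mod_p_pow_general (d : ℕ) (n : Fin d → ℕ)
    [∀ i, NeZero (n i)]
    (S : Finset (∀ i, ZMod (n i))) (h0 : (0 : ∀ i, ZMod (n i)) ∉ S)
    (hinv : ∀ s ∈ S, -s ∈ S)
    (p l : ℕ) (hp : p.Prime)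
    (hcard : (insert 0 S).card = p ^ l)
    (hdvd : p ^ l ∣ ∏ i, n i) (hndvd : ¬ p ^ (l + 1) ∣ ∏ i, n i)
    (t : Fin d) (huniq : ∀ i, p ∣ n i → i = t) :
    (∃ C : Set (∀ i, ZMod (n i)),
        IsPerfectCode (cayley (S : Set (∀ i, ZMod (n i)))) C) ↔
      ∀ s ∈ insert 0 S, ∀ s' ∈ insert 0 S, s ≠ s' →
        ¬ ((s t).val ≡ (s' t).val [MOD p ^ l]) := by
  have : Fact p.Prime := ⟨hp⟩
  have : NeZero (p ^ l) := ⟨pow_ne_zero l hp.ne_zero⟩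
  have hpl : p ^ l ∣ n t := hp.pow_dvd_apply_of_dvd_prod huniq hdvd
  let F := (ZMod.castHom hpl (ZMod (p ^ l))).toAddMonoidHom.comp
    (Pi.evalAddMonoidHom (fun i => ZMod (n i)) t)
  have hF : ∀ x y, F x = F y ↔ (x t).val ≡ (y t).val [MOD p ^ l] := fun x y => by
    change (ZMod.cast (x t) : ZMod (p ^ l)) = ZMod.cast (y t) ↔ _
    rw [ZMod.cast_eq_val, ZMod.cast_eq_val, ZMod.natCast_eq_natCast_iff]
  rw [exists_isPerfectCode_iff_injOn (ZModModule.char_nsmul_eq_zero (p ^ l)) F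
    ((ZMod.castHom_surjective hpl).comp (Function.surjective_eval t)) h0 hinv
    (by rw [hcard, ZMod.card]) (by simpa [ZMod.card, ← pow_succ'] using hndvd)]
  exact ⟨fun h s hs s' hs' hne hmod => hne (h hs hs' ((hF s s').2 hmod)),
    fun h s hs s' hs' hFs => by_contra fun hne => h s hs s' hs' hne ((hF s s').1 hFs)⟩

/-- Theorem 4.6: let `G = ℤ_{n₁} × ⋯ × ℤ_{n_d}` of order `n = n₁⋯n_d` and `S` an
inverse-closed generating subset of `G ∖ {0}` with `|S₀| = p^l` a prime power such
that `p^l ∣ n` but `p^{l+1} ∤ n`, where `S₀ = S ∪ {0}`, and suppose exactly one of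
`n₁, …, n_d`, say `n_t`, is divisible by `p`. Then `Cay(G, S)` admits a perfect
code iff `s_t ≢ s'_t (mod p^l)` for all distinct `s, s' ∈ S₀`. -/
theorem perfectCode_iff_mod_p_pow (d : ℕ) (hd : 1 ≤ d) (n : Fin d → ℕ)
    (hn : ∀ i, 2 ≤ n i) [∀ i, NeZero (n i)]
    (S : Finset (∀ i, ZMod (n i))) (h0 : (0 : ∀ i, ZMod (n i)) ∉ S)
    (hinv : ∀ s ∈ S, -s ∈ S)
    (hgen : AddSubgroup.closure (S : Set (∀ i, ZMod (n i))) = ⊤)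
    (p l : ℕ) (hp : p.Prime) (hl : 1 ≤ l)
    (hcard : (insert 0 S).card = p ^ l)
    (hdvd : p ^ l ∣ ∏ i, n i) (hndvd : ¬ p ^ (l + 1) ∣ ∏ i, n i)
    (t : Fin d) (ht : p ∣ n t) (huniq : ∀ i, p ∣ n i → i = t) :
    (∃ C : Set (∀ i, ZMod (n i)),
        IsPerfectCode (cayley (S : Set (∀ i, ZMod (n i)))) C) ↔
      ∀ s ∈ insert 0 S, ∀ s' ∈ insert 0 S, s ≠ s' →
        ¬ ((s t).val ≡ (s' t).val [MOD p ^ l]) :=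
  perfectCode_iff_mod_p_pow_general d n S h0 hinv p l hp hcard hdvd hndvd t huniq
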